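/- arXiv:1912.02431 — 7 statements merged into one kernel-verified Lean document; each statement's English description precedes it below -/
import Mathlib

section
/- Let r₁, r₂ > 0. Then 2r₁ + 4/r₁ = 2r₂ + 4/r₂ = 12 - 3(r₁ + r₂) holds if and only if r₁ = r₂ = 1 or r₁ = r₂ = 1/2. -/
/-- The Einstein condition for the left-invariant metric g_{(r₁,r₂)} on Sp(2):
the three Ricci eigenvalues coincide iff r₁ = r₂ = 1 or r₁ = r₂ = 1/2. -/
theorem einstein_condition (r₁ r₂ : ℝ) (h₁ : 0 < r₁) (h₂ : 0 < r₂) :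
    (2 * r₁ + 4 / r₁ = 2 * r₂ + 4 / r₂ ∧
      2 * r₂ + 4 / r₂ = 12 - 3 * (r₁ + r₂)) ↔
    (r₁ = 1 ∧ r₂ = 1) ∨ (r₁ = 1 / 2 ∧ r₂ = 1 / 2) := by
  have h₁' := h₁.ne'
  have h₂' := h₂.ne'
  constructor
  · rintro ⟨ha, hb⟩
    have ha' : (r₁ - r₂) * (r₁ * r₂ - 2) = 0 := by
      field_simp at ha
      nlinarith [ha]
    rcases mul_eq_zero.mp ha' with h | h
    · have he : r₁ = r₂ := by linarith
      subst he
      have hb' : (r₁ - 1) * (2 * r₁ - 1) = 0 := by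
        field_simp at hb
        nlinarith [hb]
      rcases mul_eq_zero.mp hb' with h | h
      · left; constructor <;> linarith
      · right; constructor <;> linarith
    · exfalso
      have hp : r₁ * r₂ = 2 := by linarith
      have hs : r₁ + r₂ = 12 / 5 := by
        field_simp at hb
        nlinarith [hb]
      nlinarith [sq_nonneg (r₁ - r₂)]
  · rintro (⟨e1, e2⟩ | ⟨e1, e2⟩) <;> subst e1 <;> subst e2 <;> norm_num
end

section
/- Fix r₁, r₂ > 0 and equip sp(2) = {((x,y),(-\bar{y},z)) : x,z pure imaginary, y ∈ ℍ} with the inner product ⟨ξ₁, ξ₂⟩ = (r₁/2)⟨x₁,x₂⟩ + ⟨y₁,y₂⟩ + (r₂/2)⟨z₁,z₂⟩ (Euclidean inner products on ℍ ≅ ℝ⁴). Then for all ξ₁, ξ₂, ξ₃ ∈ sp(2): -⟨ξ₁, [ξ₂,ξ₃]⟩ + ⟨ξ₂, [ξ₃,ξ₁]⟩ = ⟨(1-r₁)(x₁y₂ + x₂y₁) + (r₂-1)(y₁z₂ + y₂z₁), y₃⟩. -/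
open Quaternion
open scoped RealInnerProductSpace

/-- The inner product on sp(2) = {((x,y),(-conj y,z)) : Re x = Re z = 0}
determined by the left-invariant metric g_{(r₁,r₂)}, applied to component triples. -/
noncomputable def sp2Inner (r₁ r₂ : ℝ) (x₁ y₁ z₁ x₂ y₂ z₂ : ℍ[ℝ]) : ℝ :=
  (r₁ / 2) * ⟪x₁, x₂⟫ + ⟪y₁, y₂⟫ + (r₂ / 2) * ⟪z₁, z₂⟫

/-- x-component of the bracket [ξ₁,ξ₂] in sp(2). -/
noncomputable def brX (x₁ y₁ x₂ y₂ : ℍ[ℝ]) : ℍ[ℝ] := x₁ * x₂ - x₂ * x₁ + y₂ * star y₁ - y₁ * star y₂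

/-- y-component of the bracket [ξ₁,ξ₂] in sp(2). -/
noncomputable def brY (x₁ y₁ z₁ x₂ y₂ z₂ : ℍ[ℝ]) : ℍ[ℝ] := x₁ * y₂ - x₂ * y₁ + y₁ * z₂ - y₂ * z₁

/-- z-component of the bracket [ξ₁,ξ₂] in sp(2). -/
noncomputable def brZ (y₁ z₁ y₂ z₂ : ℍ[ℝ]) : ℍ[ℝ] := z₁ * z₂ - z₂ * z₁ + star y₂ * y₁ - star y₁ * y₂

/-! Every term of the Koszul expression is a real part of a triple product of quaternions.
Since `⟪a, b⟫ = Re (a * star b)` and `Re` is invariant under cyclic permutations, left and right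
multiplication by `a` are adjoint to multiplication by `star a`, hence skew-adjoint when `a` is
purely imaginary; and `⟪a, [b, c]⟫` is a cyclically invariant trilinear form (twice the triple
product of the imaginary parts). These rules reduce the `x`-, `y`- and `z`-parts of the expression
to multiples of `⟪x₁ y₂ + x₂ y₁, y₃⟫` and `⟪y₁ z₂ + y₂ z₁, y₃⟫`. -/

namespace Quaternion

theorem re_mul_comm {R : Type*} [CommRing R] (a b : ℍ[R]) : (a * b).re = (b * a).re := by
  simp only [re_mul]
  ring

theorem inner_mul_left_eq (a b c : ℍ[ℝ]) : ⟪a * b, c⟫ = ⟪b, star a * c⟫ := by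
  rw [inner_def, inner_def, star_mul, star_star, mul_assoc, re_mul_comm, mul_assoc]

theorem inner_mul_right_eq (a b c : ℍ[ℝ]) : ⟪a * b, c⟫ = ⟪a, c * star b⟫ := by
  rw [inner_def, inner_def, star_mul, star_star, mul_assoc]

theorem inner_mul_left_of_re_eq_zero {x : ℍ[ℝ]} (hx : x.re = 0) (a b : ℍ[ℝ]) :
    ⟪a, x * b⟫ = -⟪x * a, b⟫ := by
  rw [inner_mul_left_eq, star_eq_neg.mpr hx, neg_mul, inner_neg_right, neg_neg]

theorem inner_mul_right_of_re_eq_zero {z : ℍ[ℝ]} (hz : z.re = 0) (a b : ℍ[ℝ]) :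
    ⟪a, b * z⟫ = -⟪a * z, b⟫ := by
  rw [inner_mul_right_eq, star_eq_neg.mpr hz, mul_neg, inner_neg_right, neg_neg]

theorem inner_commutator_cyclic (a b c : ℍ[ℝ]) : ⟪a, b * c - c * b⟫ = ⟪b, c * a - a * c⟫ := by
  simp only [inner_def, re_mul, imI_mul, imJ_mul, imK_mul, re_star, imI_star, imJ_star,
    imK_star, re_sub, imI_sub, imJ_sub, imK_sub]
  ring

theorem inner_mul_star_sub_mul_star {x : ℍ[ℝ]} (hx : x.re = 0) (y y' : ℍ[ℝ]) :
    ⟪x, y * star y' - y' * star y⟫ = 2 * ⟪x * y', y⟫ := by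
  rw [inner_sub_right, ← inner_mul_right_eq, ← inner_mul_right_eq, ← real_inner_comm (x * y),
    inner_mul_left_of_re_eq_zero hx]
  ring

theorem inner_star_mul_sub_star_mul {z : ℍ[ℝ]} (hz : z.re = 0) (y y' : ℍ[ℝ]) :
    ⟪z, star y * y' - star y' * y⟫ = 2 * ⟪y * z, y'⟫ := by
  rw [inner_sub_right, ← inner_mul_left_eq, ← inner_mul_left_eq, ← real_inner_comm (y' * z),
    inner_mul_right_of_re_eq_zero hz]
  ring

end Quaternion

theorem neg_inner_brX_add_inner_brX {x₁ x₂ : ℍ[ℝ]} (hx₁ : x₁.re = 0) (hx₂ : x₂.re = 0)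
    (y₁ y₂ x₃ y₃ : ℍ[ℝ]) :
    -⟪x₁, brX x₂ y₂ x₃ y₃⟫ + ⟪x₂, brX x₃ y₃ x₁ y₁⟫ = -2 * ⟪x₁ * y₂ + x₂ * y₁, y₃⟫ := by
  have hxxx := inner_commutator_cyclic x₁ x₂ x₃
  have h₁ := inner_mul_star_sub_mul_star hx₁ y₃ y₂
  have h₂ := inner_mul_star_sub_mul_star hx₂ y₁ y₃
  have h₂' := inner_mul_left_of_re_eq_zero hx₂ y₁ y₃
  rw [real_inner_comm] at h₂'
  simp only [brX, add_sub_assoc, inner_add_right, inner_add_left]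
  linear_combination -hxxx - h₁ + h₂ + 2 * h₂'

theorem neg_inner_brZ_add_inner_brZ {z₁ z₂ : ℍ[ℝ]} (hz₁ : z₁.re = 0) (hz₂ : z₂.re = 0)
    (y₁ y₂ y₃ z₃ : ℍ[ℝ]) :
    -⟪z₁, brZ y₂ z₂ y₃ z₃⟫ + ⟪z₂, brZ y₃ z₃ y₁ z₁⟫ = 2 * ⟪y₁ * z₂ + y₂ * z₁, y₃⟫ := by
  have hzzz := inner_commutator_cyclic z₁ z₂ z₃
  have h₁ := inner_star_mul_sub_star_mul hz₁ y₃ y₂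
  have h₁' := inner_mul_right_of_re_eq_zero hz₁ y₂ y₃
  have h₂ := inner_star_mul_sub_star_mul hz₂ y₁ y₃
  rw [real_inner_comm] at h₁'
  simp only [brZ, add_sub_assoc, inner_add_right, inner_add_left]
  linear_combination -hzzz - h₁ + h₂ - 2 * h₁'

theorem neg_inner_brY_add_inner_brY {x₁ x₂ x₃ z₁ z₂ z₃ : ℍ[ℝ]} (hx₁ : x₁.re = 0)
    (hx₂ : x₂.re = 0) (hx₃ : x₃.re = 0) (hz₁ : z₁.re = 0) (hz₂ : z₂.re = 0) (hz₃ : z₃.re = 0)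
    (y₁ y₂ y₃ : ℍ[ℝ]) :
    -⟪y₁, brY x₂ y₂ z₂ x₃ y₃ z₃⟫ + ⟪y₂, brY x₃ y₃ z₃ x₁ y₁ z₁⟫
      = ⟪x₁ * y₂ + x₂ * y₁, y₃⟫ - ⟪y₁ * z₂ + y₂ * z₁, y₃⟫ := by
  have h₁ := inner_mul_left_of_re_eq_zero hx₁ y₂ y₃
  have h₂ := inner_mul_left_of_re_eq_zero hx₂ y₁ y₃
  have h₃ : ⟪y₂, x₃ * y₁⟫ = -⟪y₁, x₃ * y₂⟫ := by
    rw [inner_mul_left_of_re_eq_zero hx₃, real_inner_comm]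
  have h₁' := inner_mul_right_of_re_eq_zero hz₁ y₂ y₃
  have h₂' := inner_mul_right_of_re_eq_zero hz₂ y₁ y₃
  have h₃' : ⟪y₂, y₁ * z₃⟫ = -⟪y₁, y₂ * z₃⟫ := by
    rw [inner_mul_right_of_re_eq_zero hz₃, real_inner_comm]
  simp only [brY, inner_add_right, inner_sub_right, inner_add_left]
  linear_combination -h₁ - h₂ + h₃ + h₁' + h₂' - h₃'

theorem sp2_koszul_identity_general (r₁ r₂ : ℝ)
    (x₁ y₁ z₁ x₂ y₂ z₂ x₃ y₃ z₃ : ℍ[ℝ])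
    (hx₁ : x₁.re = 0) (hz₁ : z₁.re = 0) (hx₂ : x₂.re = 0) (hz₂ : z₂.re = 0)
    (hx₃ : x₃.re = 0) (hz₃ : z₃.re = 0) :
    -sp2Inner r₁ r₂ x₁ y₁ z₁ (brX x₂ y₂ x₃ y₃) (brY x₂ y₂ z₂ x₃ y₃ z₃) (brZ y₂ z₂ y₃ z₃)
      + sp2Inner r₁ r₂ x₂ y₂ z₂ (brX x₃ y₃ x₁ y₁) (brY x₃ y₃ z₃ x₁ y₁ z₁) (brZ y₃ z₃ y₁ z₁)
    = ⟪(1 - r₁) • (x₁ * y₂ + x₂ * y₁) + (r₂ - 1) • (y₁ * z₂ + y₂ * z₁), y₃⟫ := by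
  have hX := neg_inner_brX_add_inner_brX hx₁ hx₂ y₁ y₂ x₃ y₃
  have hY := neg_inner_brY_add_inner_brY hx₁ hx₂ hx₃ hz₁ hz₂ hz₃ y₁ y₂ y₃
  have hZ := neg_inner_brZ_add_inner_brZ hz₁ hz₂ y₁ y₂ y₃ z₃
  rw [sp2Inner, sp2Inner, inner_add_left, real_inner_smul_left, real_inner_smul_left]
  linear_combination (r₁ / 2) * hX + hY + (r₂ / 2) * hZ

/-- The Koszul-formula identity determining the Levi-Civita connection of g_{(r₁,r₂)}:
  -⟨ξ₁,[ξ₂,ξ₃]⟩ + ⟨ξ₂,[ξ₃,ξ₁]⟩ = ⟨(1-r₁)(x₁y₂+x₂y₁) + (r₂-1)(y₁z₂+y₂z₁), y₃⟩. -/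
theorem sp2_koszul_identity (r₁ r₂ : ℝ) (h₁ : 0 < r₁) (h₂ : 0 < r₂)
    (x₁ y₁ z₁ x₂ y₂ z₂ x₃ y₃ z₃ : ℍ[ℝ])
    (hx₁ : x₁.re = 0) (hz₁ : z₁.re = 0) (hx₂ : x₂.re = 0) (hz₂ : z₂.re = 0)
    (hx₃ : x₃.re = 0) (hz₃ : z₃.re = 0) :
    -sp2Inner r₁ r₂ x₁ y₁ z₁ (brX x₂ y₂ x₃ y₃) (brY x₂ y₂ z₂ x₃ y₃ z₃) (brZ y₂ z₂ y₃ z₃)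
      + sp2Inner r₁ r₂ x₂ y₂ z₂ (brX x₃ y₃ x₁ y₁) (brY x₃ y₃ z₃ x₁ y₁ z₁) (brZ y₃ z₃ y₁ z₁)
    = ⟪(1 - r₁) • (x₁ * y₂ + x₂ * y₁) + (r₂ - 1) • (y₁ * z₂ + y₂ * z₁), y₃⟫ :=
  sp2_koszul_identity_general r₁ r₂ x₁ y₁ z₁ x₂ y₂ z₂ x₃ y₃ z₃ hx₁ hz₁ hx₂ hz₂ hx₃ hz₃
end

section
/- Fix r₁, r₂ > 0 and ξ₁, ξ₂ ∈ sp(2). Set α₁ = y₂\bar{y₁} - y₁\bar{y₂}, α₂ = \bar{y₂}y₁ - \bar{y₁}y₂, β₁ = x₁x₂ - x₂x₁, β₂ = z₁z₂ - z₂z₁, γ₁ = x₁y₂ - x₂y₁, γ₂ = y₁z₂ - y₂z₁, D(ξ₁,ξ₂) = (1/2)(1-r₁)(x₁y₂ + x₂y₁) + (1/2)(r₂-1)(y₁z₂ + y₂z₁). Then with |ξ|² = (r₁/2)|x|² + |y|² + (r₂/2)|z|², the following algebraic identity holds: (r₁/8)|α₁+β₁|² + (1/4)|γ₁+γ₂|²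 + (r₂/8)|α₂+β₂|² + |D(ξ₁,ξ₂)|² - ⟨(1-r₁)x₁y₁ + (r₂-1)y₁z₁, (1-r₁)x₂y₂ + (r₂-1)y₂z₂⟩ + ((1-r₁)/2)⟨α₁+β₁, α₁⟩ + ((r₁-1)/2)⟨γ₁+γ₂, γ₁⟩ + ((r₂-1)/2)⟨γ₁+γ₂, γ₂⟩ + ((1-r₂)/2)⟨α₂+β₂, α₂⟩ = (1/4)|r₁γ₁+r₂γ₂|² + (r₁/8)|β₁+(3-2r₁)α₁|² + (r₂/8)|β₂+(3-2r₂)α₂|² + (1/2)((1-r₁)³+(1-r₂)³)|α₁|². -/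
open Quaternion
open scoped RealInnerProductSpace

/-! With `a = 1 - r₁` and `c = 1 - r₂`, the difference of the two sides is a polynomial in `a` and
`c` with inner products as coefficients. Bilinearity alone cancels everything except the
coefficients of `a²`, `c²`, `ac` and `c³`. The first three vanish by identities in `ℍ` that hold
because `x₁, x₂, z₁, z₂` are purely imaginary, and the last one is `|α₂|² - |α₁|²`, which vanishes
because `y₂ ȳ₁` and `ȳ₂ y₁` have the same norm and the same real part. -/

theorem sp2_curvature_identity_of_inner_relations {E : Type*} [NormedAddCommGroup E]
    [InnerProductSpace ℝ E] (r₁ r₂ : ℝ) (α₁ α₂ β₁ β₂ p₁ p₂ q₁ q₂ u₁ u₂ v₁ v₂ : E)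
    (hu : 2 * (⟪u₁, u₂⟫ - ⟪p₁, p₂⟫) = ⟪β₁, α₁⟫)
    (hv : 2 * (⟪v₁, v₂⟫ - ⟪q₁, q₂⟫) = ⟪β₂, α₂⟫)
    (huv : ⟪u₁, v₂⟫ + ⟪v₁, u₂⟫ = ⟪p₁, q₁⟫ + ⟪p₂, q₂⟫)
    (hα : ‖α₁‖ = ‖α₂‖) :
    (r₁ / 8) * ‖α₁ + β₁‖ ^ 2 + (1 / 4) * ‖(p₁ - p₂) + (q₁ - q₂)‖ ^ 2 + (r₂ / 8) * ‖α₂ + β₂‖ ^ 2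
       + ‖(1 / 2 * (1 - r₁)) • (p₁ + p₂) + (1 / 2 * (r₂ - 1)) • (q₁ + q₂)‖ ^ 2
       - ⟪(1 - r₁) • u₁ + (r₂ - 1) • v₁, (1 - r₁) • u₂ + (r₂ - 1) • v₂⟫
       + ((1 - r₁) / 2) * ⟪α₁ + β₁, α₁⟫ + ((r₁ - 1) / 2) * ⟪(p₁ - p₂) + (q₁ - q₂), p₁ - p₂⟫
       + ((r₂ - 1) / 2) * ⟪(p₁ - p₂) + (q₁ - q₂), q₁ - q₂⟫ + ((1 - r₂) / 2) * ⟪α₂ + β₂, α₂⟫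
     = (1 / 4) * ‖r₁ • (p₁ - p₂) + r₂ • (q₁ - q₂)‖ ^ 2 + (r₁ / 8) * ‖β₁ + (3 - 2 * r₁) • α₁‖ ^ 2
       + (r₂ / 8) * ‖β₂ + (3 - 2 * r₂) • α₂‖ ^ 2
       + (1 / 2) * ((1 - r₁) ^ 3 + (1 - r₂) ^ 3) * ‖α₁‖ ^ 2 := by
  have hα_sq : ‖α₁‖ ^ 2 = ‖α₂‖ ^ 2 := by rw [hα]
  simp only [← real_inner_self_eq_norm_sq, inner_add_left, inner_add_right, inner_sub_left,
    inner_sub_right, real_inner_smul_left, real_inner_smul_right] at hα_sq ⊢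
  simp only [real_inner_comm β₁ α₁, real_inner_comm β₂ α₂, real_inner_comm p₁ p₂,
    real_inner_comm q₁ q₂, real_inner_comm p₁ q₁, real_inner_comm p₁ q₂, real_inner_comm p₂ q₁,
    real_inner_comm p₂ q₂]
  linear_combination (-(1 - r₁) ^ 2 / 2) * hu - (1 - r₂) ^ 2 / 2 * hv
    + (1 - r₁) * (1 - r₂) * huv - (1 - r₂) ^ 3 / 2 * hα_sq

namespace Quaternion

theorem two_mul_inner_mul_mul_sub_of_re_left (x₁ x₂ y₁ y₂ : ℍ[ℝ]) (hx₁ : x₁.re = 0)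
    (hx₂ : x₂.re = 0) :
    2 * (⟪x₁ * y₁, x₂ * y₂⟫ - ⟪x₁ * y₂, x₂ * y₁⟫)
      = ⟪x₁ * x₂ - x₂ * x₁, y₂ * star y₁ - y₁ * star y₂⟫ := by
  simp only [inner_def, re_mul, re_sub, re_star, imI_star, imJ_star, imK_star, imI_mul, imJ_mul,
    imK_mul, imI_sub, imJ_sub, imK_sub, hx₁, hx₂]
  ring

theorem two_mul_inner_mul_mul_sub_of_re_right (y₁ y₂ z₁ z₂ : ℍ[ℝ]) (hz₁ : z₁.re = 0)
    (hz₂ : z₂.re = 0) :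
    2 * (⟪y₁ * z₁, y₂ * z₂⟫ - ⟪y₁ * z₂, y₂ * z₁⟫)
      = ⟪z₁ * z₂ - z₂ * z₁, star y₂ * y₁ - star y₁ * y₂⟫ := by
  simp only [inner_def, re_mul, re_sub, re_star, imI_star, imJ_star, imK_star, imI_mul, imJ_mul,
    imK_mul, imI_sub, imJ_sub, imK_sub, hz₁, hz₂]
  ring

theorem inner_mul_mul_add_inner_mul_mul_of_re (x₁ x₂ y₁ y₂ z₁ z₂ : ℍ[ℝ]) (hx₁ : x₁.re = 0)
    (hx₂ : x₂.re = 0) (hz₁ : z₁.re = 0) (hz₂ : z₂.re = 0) :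
    ⟪x₁ * y₁, y₂ * z₂⟫ + ⟪y₁ * z₁, x₂ * y₂⟫ = ⟪x₁ * y₂, y₁ * z₂⟫ + ⟪x₂ * y₁, y₂ * z₁⟫ := by
  simp only [inner_def, re_mul, re_star, imI_star, imJ_star, imK_star, imI_mul, imJ_mul, imK_mul,
    hx₁, hx₂, hz₁, hz₂]
  ring

theorem norm_mul_star_sub_eq_norm_star_mul_sub (y₁ y₂ : ℍ[ℝ]) :
    ‖y₂ * star y₁ - y₁ * star y₂‖ = ‖star y₂ * y₁ - star y₁ * y₂‖ := by
  rw [← sq_eq_sq₀ (norm_nonneg _) (norm_nonneg _), ← real_inner_self_eq_norm_sq,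
    ← real_inner_self_eq_norm_sq]
  simp only [inner_def, re_mul, re_sub, re_star, imI_star, imJ_star, imK_star, imI_mul, imJ_mul,
    imK_mul, imI_sub, imJ_sub, imK_sub]
  ring

end Quaternion

theorem sp2_curvature_identity_general (r₁ r₂ : ℝ)
    (x₁ y₁ z₁ x₂ y₂ z₂ : ℍ[ℝ])
    (hx₁ : x₁.re = 0) (hz₁ : z₁.re = 0) (hx₂ : x₂.re = 0) (hz₂ : z₂.re = 0) :
    (let α₁ : ℍ[ℝ] := y₂ * star y₁ - y₁ * star y₂
     let α₂ : ℍ[ℝ] := star y₂ * y₁ - star y₁ * y₂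
     let β₁ : ℍ[ℝ] := x₁ * x₂ - x₂ * x₁
     let β₂ : ℍ[ℝ] := z₁ * z₂ - z₂ * z₁
     let γ₁ : ℍ[ℝ] := x₁ * y₂ - x₂ * y₁
     let γ₂ : ℍ[ℝ] := y₁ * z₂ - y₂ * z₁
     let D : ℍ[ℝ] := (1 / 2 * (1 - r₁)) • (x₁ * y₂ + x₂ * y₁)
        + (1 / 2 * (r₂ - 1)) • (y₁ * z₂ + y₂ * z₁)
     (r₁ / 8) * ‖α₁ + β₁‖ ^ 2 + (1 / 4) * ‖γ₁ + γ₂‖ ^ 2 + (r₂ / 8) * ‖α₂ + β₂‖ ^ 2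
       + ‖D‖ ^ 2
       - ⟪(1 - r₁) • (x₁ * y₁) + (r₂ - 1) • (y₁ * z₁),
           (1 - r₁) • (x₂ * y₂) + (r₂ - 1) • (y₂ * z₂)⟫
       + ((1 - r₁) / 2) * ⟪α₁ + β₁, α₁⟫ + ((r₁ - 1) / 2) * ⟪γ₁ + γ₂, γ₁⟫
       + ((r₂ - 1) / 2) * ⟪γ₁ + γ₂, γ₂⟫ + ((1 - r₂) / 2) * ⟪α₂ + β₂, α₂⟫
     = (1 / 4) * ‖r₁ • γ₁ + r₂ • γ₂‖ ^ 2 + (r₁ / 8) * ‖β₁ + (3 - 2 * r₁) • α₁‖ ^ 2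
       + (r₂ / 8) * ‖β₂ + (3 - 2 * r₂) • α₂‖ ^ 2
       + (1 / 2) * ((1 - r₁) ^ 3 + (1 - r₂) ^ 3) * ‖α₁‖ ^ 2) :=
  sp2_curvature_identity_of_inner_relations r₁ r₂ _ _ _ _ _ _ _ _
    (x₁ * y₁) (x₂ * y₂) (y₁ * z₁) (y₂ * z₂)
    (two_mul_inner_mul_mul_sub_of_re_left x₁ x₂ y₁ y₂ hx₁ hx₂)
    (two_mul_inner_mul_mul_sub_of_re_right y₁ y₂ z₁ z₂ hz₁ hz₂)
    (inner_mul_mul_add_inner_mul_mul_of_re x₁ x₂ y₁ y₂ z₁ z₂ hx₁ hx₂ hz₁ hz₂)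
    (norm_mul_star_sub_eq_norm_star_mul_sub y₁ y₂)

/-- The algebraic identity rewriting the sectional-curvature expression
⟨R(ξ₁,ξ₂)ξ₁,ξ₂⟩ of the left-invariant metric g_{(r₁,r₂)} on Sp(2) in a
manifestly sign-definite form. -/
theorem sp2_curvature_identity (r₁ r₂ : ℝ) (h₁ : 0 < r₁) (h₂ : 0 < r₂)
    (x₁ y₁ z₁ x₂ y₂ z₂ : ℍ[ℝ])
    (hx₁ : x₁.re = 0) (hz₁ : z₁.re = 0) (hx₂ : x₂.re = 0) (hz₂ : z₂.re = 0) :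
    (let α₁ : ℍ[ℝ] := y₂ * star y₁ - y₁ * star y₂
     let α₂ : ℍ[ℝ] := star y₂ * y₁ - star y₁ * y₂
     let β₁ : ℍ[ℝ] := x₁ * x₂ - x₂ * x₁
     let β₂ : ℍ[ℝ] := z₁ * z₂ - z₂ * z₁
     let γ₁ : ℍ[ℝ] := x₁ * y₂ - x₂ * y₁
     let γ₂ : ℍ[ℝ] := y₁ * z₂ - y₂ * z₁
     let D : ℍ[ℝ] := (1 / 2 * (1 - r₁)) • (x₁ * y₂ + x₂ * y₁)
        + (1 / 2 * (r₂ - 1)) • (y₁ * z₂ + y₂ * z₁)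
     (r₁ / 8) * ‖α₁ + β₁‖ ^ 2 + (1 / 4) * ‖γ₁ + γ₂‖ ^ 2 + (r₂ / 8) * ‖α₂ + β₂‖ ^ 2
       + ‖D‖ ^ 2
       - ⟪(1 - r₁) • (x₁ * y₁) + (r₂ - 1) • (y₁ * z₁),
           (1 - r₁) • (x₂ * y₂) + (r₂ - 1) • (y₂ * z₂)⟫
       + ((1 - r₁) / 2) * ⟪α₁ + β₁, α₁⟫ + ((r₁ - 1) / 2) * ⟪γ₁ + γ₂, γ₁⟫
       + ((r₂ - 1) / 2) * ⟪γ₁ + γ₂, γ₂⟫ + ((1 - r₂) / 2) * ⟪α₂ + β₂, α₂⟫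
     = (1 / 4) * ‖r₁ • γ₁ + r₂ • γ₂‖ ^ 2 + (r₁ / 8) * ‖β₁ + (3 - 2 * r₁) • α₁‖ ^ 2
       + (r₂ / 8) * ‖β₂ + (3 - 2 * r₂) • α₂‖ ^ 2
       + (1 / 2) * ((1 - r₁) ^ 3 + (1 - r₂) ^ 3) * ‖α₁‖ ^ 2) :=
  sp2_curvature_identity_general r₁ r₂ x₁ y₁ z₁ x₂ y₂ z₂ hx₁ hz₁ hx₂ hz₂
end

section
/- Let r₁, r₂ > 0 with r₁ + r₂ ≤ 2. Then for all ξ₁, ξ₂ ∈ sp(2), the quantity K(ξ₁,ξ₂) := (1/4)|r₁γ₁+r₂γ₂|² + (r₁/8)|β₁+(3-2r₁)α₁|² + (r₂/8)|β₂+(3-2r₂)α₂|² + (1/2)((1-r₁)³+(1-r₂)³)|α₁|² is nonnegative. -/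
open Quaternion

/-- If r₁ + r₂ ≤ 2, the sectional-curvature expression of the left-invariant
metric g_{(r₁,r₂)} on Sp(2) is nonnegative for all ξ₁, ξ₂ ∈ sp(2). -/
theorem sp2_curvature_nonneg (r₁ r₂ : ℝ) (h₁ : 0 < r₁) (h₂ : 0 < r₂)
    (h : r₁ + r₂ ≤ 2)
    (x₁ y₁ z₁ x₂ y₂ z₂ : ℍ[ℝ])
    (hx₁ : x₁.re = 0) (hz₁ : z₁.re = 0) (hx₂ : x₂.re = 0) (hz₂ : z₂.re = 0) :
    (let α₁ : ℍ[ℝ] := y₂ * star y₁ - y₁ * star y₂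
     let α₂ : ℍ[ℝ] := star y₂ * y₁ - star y₁ * y₂
     let β₁ : ℍ[ℝ] := x₁ * x₂ - x₂ * x₁
     let β₂ : ℍ[ℝ] := z₁ * z₂ - z₂ * z₁
     let γ₁ : ℍ[ℝ] := x₁ * y₂ - x₂ * y₁
     let γ₂ : ℍ[ℝ] := y₁ * z₂ - y₂ * z₁
     0 ≤ (1 / 4) * ‖r₁ • γ₁ + r₂ • γ₂‖ ^ 2 + (r₁ / 8) * ‖β₁ + (3 - 2 * r₁) • α₁‖ ^ 2
       + (r₂ / 8) * ‖β₂ + (3 - 2 * r₂) • α₂‖ ^ 2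
       + (1 / 2) * ((1 - r₁) ^ 3 + (1 - r₂) ^ 3) * ‖α₁‖ ^ 2) := by
  have h3 : 0 ≤ (1 - r₁) ^ 3 + (1 - r₂) ^ 3 := by
    nlinarith [sq_nonneg (r₁ - r₂), sq_nonneg (2 - r₁ - r₂)]
  intro α₁ α₂ β₁ β₂ γ₁ γ₂
  have n1 : (0:ℝ) ≤ ‖r₁ • γ₁ + r₂ • γ₂‖ ^ 2 := sq_nonneg _
  have n2 : (0:ℝ) ≤ ‖β₁ + (3 - 2 * r₁) • α₁‖ ^ 2 := sq_nonneg _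
  have n3 : (0:ℝ) ≤ ‖β₂ + (3 - 2 * r₂) • α₂‖ ^ 2 := sq_nonneg _
  have n4 : (0:ℝ) ≤ ‖α₁‖ ^ 2 := sq_nonneg _
  nlinarith [mul_nonneg h3 n4, mul_nonneg h₁.le n2, mul_nonneg h₂.le n3]
end

section
/- Let r₁, r₂ > 0 with r₁ + r₂ > 2. Then there exist ξ₁, ξ₂ ∈ sp(2) such that α₁ ≠ 0, r₁γ₁ + r₂γ₂ = 0, β₁ + (3-2r₁)α₁ = 0, and β₂ + (3-2r₂)α₂ = 0; consequently the sectional curvature expression (1/4)|r₁γ₁+r₂γ₂|² + (r₁/8)|β₁+(3-2r₁)α₁|² + (r₂/8)|β₂+(3-2r₂)α₂|² + (1/2)((1-r₁)³+(1-r₂)³)|α₁|² is strictly negative for this pair. -/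
open Quaternion Filter

/-!
Take `ξ₁, ξ₂` with quaternion entries `x₁ = a i, y₁ = -j, z₁ = b i` and `x₂ = c j, y₂ = i, z₂ = d j`.
Then `α₁ = α₂ = 2k`, `β₁ = 2ac k`, `β₂ = 2bd k`, `γ₁ = -(a + c)` and `γ₂ = b + d`, so the three
nonnegative terms vanish as soon as `ac = 2r₁ - 3`, `bd = 2r₂ - 3` and `r₁(a + c) = r₂(b + d)`.
Such reals exist: prescribe `a + c = r₂ t` and `b + d = r₁ t` for `t` so large that both quadratics
have real roots. The remaining term is negative because `(1 - r₁) + (1 - r₂) < 0`.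
-/

lemma exists_add_eq_mul_eq_of_four_mul_le_sq {s p : ℝ} (h : 4 * p ≤ s ^ 2) :
    ∃ a c : ℝ, a + c = s ∧ a * c = p := by
  have hsqrt := Real.sq_sqrt (sub_nonneg.2 h)
  exact ⟨(s + √(s ^ 2 - 4 * p)) / 2, (s - √(s ^ 2 - 4 * p)) / 2, by ring,
    by linear_combination (-1 / 4) * hsqrt⟩

lemma eventually_le_sq_mul {r : ℝ} (hr : r ≠ 0) (m : ℝ) : ∀ᶠ t in atTop, m ≤ (r * t) ^ 2 := by
  have : Tendsto (fun t : ℝ => (r * t) ^ 2) atTop atTop := by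
    simp_rw [mul_pow]
    exact (tendsto_pow_atTop two_ne_zero).const_mul_atTop (sq_pos_of_ne_zero hr)
  exact this.eventually_ge_atTop m

lemma pow_three_add_pow_three_neg_of_add_neg {x y : ℝ} (h : x + y < 0) : x ^ 3 + y ^ 3 < 0 := by
  have : x ^ 3 < (-y) ^ 3 := Odd.strictMono_pow (by decide) (by linarith)
  linarith [Odd.neg_pow (by decide : Odd 3) y]

lemma curvature_neg_of_terms_eq_zero {r₁ r₂ : ℝ} (h : 2 < r₁ + r₂) {α₁ α₂ β₁ β₂ γ₁ γ₂ : ℍ[ℝ]}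
    (hα : α₁ ≠ 0) (hγ : r₁ • γ₁ + r₂ • γ₂ = 0) (hβ₁ : β₁ + (3 - 2 * r₁) • α₁ = 0)
    (hβ₂ : β₂ + (3 - 2 * r₂) • α₂ = 0) :
    (1 / 4) * ‖r₁ • γ₁ + r₂ • γ₂‖ ^ 2 + (r₁ / 8) * ‖β₁ + (3 - 2 * r₁) • α₁‖ ^ 2
      + (r₂ / 8) * ‖β₂ + (3 - 2 * r₂) • α₂‖ ^ 2
      + (1 / 2) * ((1 - r₁) ^ 3 + (1 - r₂) ^ 3) * ‖α₁‖ ^ 2 < 0 := by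
  have hcube : (1 - r₁) ^ 3 + (1 - r₂) ^ 3 < 0 := pow_three_add_pow_three_neg_of_add_neg (by linarith)
  have hnorm : 0 < ‖α₁‖ ^ 2 := pow_pos (norm_pos_iff.2 hα) 2
  rw [hγ, hβ₁, hβ₂, norm_zero]
  nlinarith

lemma alpha₁_eq : (⟨0, 1, 0, 0⟩ : ℍ[ℝ]) * star ⟨0, 0, -1, 0⟩ - ⟨0, 0, -1, 0⟩ * star ⟨0, 1, 0, 0⟩
    = ⟨0, 0, 0, 2⟩ := by
  ext <;> simp; norm_num

lemma alpha₂_eq : star (⟨0, 1, 0, 0⟩ : ℍ[ℝ]) * ⟨0, 0, -1, 0⟩ - star ⟨0, 0, -1, 0⟩ * ⟨0, 1, 0, 0⟩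
    = ⟨0, 0, 0, 2⟩ := by
  ext <;> simp; norm_num

lemma commutator_imI_imJ (a c : ℝ) :
    (⟨0, a, 0, 0⟩ : ℍ[ℝ]) * ⟨0, 0, c, 0⟩ - ⟨0, 0, c, 0⟩ * ⟨0, a, 0, 0⟩ = ⟨0, 0, 0, 2 * (a * c)⟩ := by
  ext <;> simp; ring

lemma gamma₁_eq (a c : ℝ) :
    (⟨0, a, 0, 0⟩ : ℍ[ℝ]) * ⟨0, 1, 0, 0⟩ - ⟨0, 0, c, 0⟩ * ⟨0, 0, -1, 0⟩ = ⟨-(a + c), 0, 0, 0⟩ := by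
  ext <;> simp; ring

lemma gamma₂_eq (b d : ℝ) :
    (⟨0, 0, -1, 0⟩ : ℍ[ℝ]) * ⟨0, 0, d, 0⟩ - ⟨0, 1, 0, 0⟩ * ⟨0, b, 0, 0⟩ = ⟨b + d, 0, 0, 0⟩ := by
  ext <;> simp; ring

lemma mk_imK_add_smul_mk_imK_eq_zero {p r : ℝ} (h : p = 2 * r - 3) :
    (⟨0, 0, 0, 2 * p⟩ : ℍ[ℝ]) + (3 - 2 * r) • ⟨0, 0, 0, 2⟩ = 0 := by
  ext <;> simp; linear_combination 2 * h

lemma smul_mk_re_add_smul_mk_re_eq_zero {r₁ r₂ s₁ s₂ : ℝ} (h : r₁ * s₁ = r₂ * s₂) :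
    r₁ • (⟨-s₁, 0, 0, 0⟩ : ℍ[ℝ]) + r₂ • ⟨s₂, 0, 0, 0⟩ = 0 := by
  ext <;> simp; linear_combination -h

/-- If r₁ + r₂ > 2, there is a pair ξ₁, ξ₂ ∈ sp(2) making all nonnegative terms
of the sectional-curvature expression vanish while α₁ ≠ 0, so the sectional
curvature expression is strictly negative. -/
theorem sp2_curvature_negative (r₁ r₂ : ℝ) (h₁ : 0 < r₁) (h₂ : 0 < r₂)
    (h : 2 < r₁ + r₂) :
    ∃ x₁ y₁ z₁ x₂ y₂ z₂ : ℍ[ℝ],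
      x₁.re = 0 ∧ z₁.re = 0 ∧ x₂.re = 0 ∧ z₂.re = 0 ∧
      (let α₁ : ℍ[ℝ] := y₂ * star y₁ - y₁ * star y₂
       let α₂ : ℍ[ℝ] := star y₂ * y₁ - star y₁ * y₂
       let β₁ : ℍ[ℝ] := x₁ * x₂ - x₂ * x₁
       let β₂ : ℍ[ℝ] := z₁ * z₂ - z₂ * z₁
       let γ₁ : ℍ[ℝ] := x₁ * y₂ - x₂ * y₁
       let γ₂ : ℍ[ℝ] := y₁ * z₂ - y₂ * z₁
       α₁ ≠ 0 ∧ r₁ • γ₁ + r₂ • γ₂ = 0 ∧ β₁ + (3 - 2 * r₁) • α₁ = 0 ∧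
         β₂ + (3 - 2 * r₂) • α₂ = 0 ∧
       (1 / 4) * ‖r₁ • γ₁ + r₂ • γ₂‖ ^ 2 + (r₁ / 8) * ‖β₁ + (3 - 2 * r₁) • α₁‖ ^ 2
         + (r₂ / 8) * ‖β₂ + (3 - 2 * r₂) • α₂‖ ^ 2
         + (1 / 2) * ((1 - r₁) ^ 3 + (1 - r₂) ^ 3) * ‖α₁‖ ^ 2 < 0) := by
  obtain ⟨t, ht₁, ht₂⟩ :=
    ((eventually_le_sq_mul h₂.ne' (4 * (2 * r₁ - 3))).and
      (eventually_le_sq_mul h₁.ne' (4 * (2 * r₂ - 3)))).exists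
  obtain ⟨a, c, hac_add, hac_mul⟩ := exists_add_eq_mul_eq_of_four_mul_le_sq ht₁
  obtain ⟨b, d, hbd_add, hbd_mul⟩ := exists_add_eq_mul_eq_of_four_mul_le_sq ht₂
  refine ⟨⟨0, a, 0, 0⟩, ⟨0, 0, -1, 0⟩, ⟨0, b, 0, 0⟩, ⟨0, 0, c, 0⟩, ⟨0, 1, 0, 0⟩, ⟨0, 0, d, 0⟩,
    rfl, rfl, rfl, rfl, ?_⟩
  intro α₁ α₂ β₁ β₂ γ₁ γ₂
  have hα₁ : α₁ = ⟨0, 0, 0, 2⟩ := alpha₁_eq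
  have hα₂ : α₂ = ⟨0, 0, 0, 2⟩ := alpha₂_eq
  have hβ₁ : β₁ = ⟨0, 0, 0, 2 * (a * c)⟩ := commutator_imI_imJ a c
  have hβ₂ : β₂ = ⟨0, 0, 0, 2 * (b * d)⟩ := commutator_imI_imJ b d
  have hγ₁ : γ₁ = ⟨-(a + c), 0, 0, 0⟩ := gamma₁_eq a c
  have hγ₂ : γ₂ = ⟨b + d, 0, 0, 0⟩ := gamma₂_eq b d
  have hα : α₁ ≠ 0 := fun h0 => by simpa [hα₁] using congrArg QuaternionAlgebra.imK h0
  have hγ : r₁ • γ₁ + r₂ • γ₂ = 0 := by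
    rw [hγ₁, hγ₂]
    exact smul_mk_re_add_smul_mk_re_eq_zero (by rw [hac_add, hbd_add]; ring)
  have hβα₁ : β₁ + (3 - 2 * r₁) • α₁ = 0 := by
    rw [hβ₁, hα₁]; exact mk_imK_add_smul_mk_imK_eq_zero hac_mul
  have hβα₂ : β₂ + (3 - 2 * r₂) • α₂ = 0 := by
    rw [hβ₂, hα₂]; exact mk_imK_add_smul_mk_imK_eq_zero hbd_mul
  exact ⟨hα, hγ, hβα₁, hβα₂, curvature_neg_of_terms_eq_zero h hα hγ hβα₁ hβα₂⟩
end

section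
/- The Gromoll–Meyer action of S³ = Sp(1) on Sp(2), given by p · Q = diag(p,p) · Q · diag(\bar{p}, 1), is free: if diag(p,p) Q diag(\bar{p},1) = Q for some Q ∈ Sp(2) and unit quaternion p, then p = 1. -/
open Quaternion Matrix

/-- The Gromoll–Meyer action of S³ on Sp(2) is free: if
diag(p,p)·Q·diag(conj p,1) = Q for Q ∈ Sp(2) and a unit quaternion p, then p = 1. -/
theorem gromoll_meyer_action_free
    (Q : Matrix (Fin 2) (Fin 2) ℍ[ℝ]) (hQ : Q * Qᴴ = 1)
    (p : ℍ[ℝ]) (hp : ‖p‖ = 1)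
    (hfix : !![p, 0; 0, p] * Q * !![star p, 0; 0, 1] = Q) :
    p = 1 := by
  have h01 := congrFun (congrFun hfix 0) 1
  have h11 := congrFun (congrFun hfix 1) 1
  simp [Matrix.mul_apply, Matrix.vecMul, dotProduct, Fin.sum_univ_succ] at h01 h11
  -- h01 : p * Q 0 1 = Q 0 1, h11 : p * Q 1 1 = Q 1 1
  by_cases hb : Q 0 1 = 0
  · by_cases hd : Q 1 1 = 0
    · exfalso
      have e00 := congrFun (congrFun hQ 0) 0
      have e10 := congrFun (congrFun hQ 1) 0
      have e11 := congrFun (congrFun hQ 1) 1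
      simp [Matrix.mul_apply, Fin.sum_univ_succ, Matrix.conjTranspose_apply,
        hb, hd] at e00 e10 e11
      have h00ne : Q 0 0 ≠ 0 := by
        rintro h; rw [h] at e00; simp at e00
      have h10 : Q 1 0 = 0 := by
        rcases e10 with h | h
        · exact h
        · exact absurd h h00ne
      rw [h10] at e11; simp at e11
    · have h : (p - 1) * Q 1 1 = 0 := by
        rw [sub_mul, one_mul, h11, sub_self]
      exact sub_eq_zero.mp ((mul_eq_zero.mp h).resolve_right hd)
  · have h : (p - 1) * Q 0 1 = 0 := by
      rw [sub_mul, one_mul, h01, sub_self]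
    exact sub_eq_zero.mp ((mul_eq_zero.mp h).resolve_right hb)
end

section
/- Let r̄₁, r₂ > 0 and let ξ₁, ξ₂ ∈ sp(2) with z₁ = z₂ = 0 (i.e., ξᵢ = ((xᵢ, yᵢ), (-\bar{yᵢ}, 0)) with xᵢ pure imaginary). If α₁ = y₂\bar{y₁} - y₁\bar{y₂} = 0, β₁ = x₁x₂ - x₂x₁ = 0, and γ₁ = x₁y₂ - x₂y₁ = 0, then ξ₁ and ξ₂ are linearly dependent over ℝ. -/
/-!
If `a * star b` is self-adjoint it is real, say `r`, and multiplying by `b` on the right gives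
`|b|² a = r b`. Both `y₂ ȳ₁` (by `α₁ = 0`) and, for commuting pure imaginary quaternions,
`x₂ x̄₁ = -x₂ x₁` (by `β₁ = 0`) are self-adjoint, so `x₂ ∥ x₁` when `x₁ ≠ 0`, and then `γ₁ = 0`
transports the same ratio to the `y`'s after cancelling `x₁`. If `x₁ = 0`, then `γ₁ = 0` forces
`x₂ = 0` or `y₁ = 0`, and the first case is settled by `α₁ = 0` alone.
-/

open Quaternion

theorem exists_pair_ne_zero_smul_add_smul_eq_zero {R M : Type*} [Ring R] [AddCommGroup M]
    [Module R M] {n r : R} {x₁ x₂ y₁ y₂ : M} (hn : n ≠ 0)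
    (hx : n • x₂ = r • x₁) (hy : n • y₂ = r • y₁) :
    ∃ a b : R, (a, b) ≠ (0, 0) ∧ a • x₁ + b • x₂ = 0 ∧ a • y₁ + b • y₂ = 0 :=
  ⟨r, -n, by simp [hn], by rw [neg_smul, hx, add_neg_cancel], by rw [neg_smul, hy, add_neg_cancel]⟩

theorem smul_eq_smul_of_mul_eq_mul {R A : Type*} [CommSemiring R] [Ring A] [NoZeroDivisors A]
    [Algebra R A] {n r : R} {a b y₁ y₂ : A} (ha : a ≠ 0) (hab : n • b = r • a)
    (h : a * y₂ = b * y₁) : n • y₂ = r • y₁ :=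
  mul_left_cancel₀ ha <| by
    rw [mul_smul_comm, h, ← smul_mul_assoc, hab, smul_mul_assoc, mul_smul_comm]

namespace Quaternion

theorem normSq_smul_eq_re_smul_of_mul_star_eq {a b : ℍ[ℝ]} (h : a * star b = b * star a) :
    normSq b • a = (a * star b).re • b := by
  have hreal : a * star b = ((a * star b).re : ℍ[ℝ]) :=
    star_eq_self.mp (show star (a * star b) = a * star b by rw [star_mul, star_star, h])
  calc normSq b • a = a * star b * b := by rw [mul_assoc, star_mul_self, mul_coe_eq_smul]
    _ = (a * star b).re • b := by rw [← coe_mul_eq_smul, ← hreal]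

theorem mul_star_eq_of_commute_of_re_eq_zero {a b : ℍ[ℝ]} (ha : a.re = 0) (hb : b.re = 0)
    (h : a * b = b * a) : a * star b = b * star a := by
  rw [star_eq_neg.mpr ha, star_eq_neg.mpr hb, mul_neg, mul_neg, h]

end Quaternion

theorem horizontal_zero_curvature_dependent_general
    (x₁ y₁ x₂ y₂ : ℍ[ℝ]) (hx₁ : x₁.re = 0) (hx₂ : x₂.re = 0)
    (hα : y₂ * star y₁ - y₁ * star y₂ = 0)
    (hβ : x₁ * x₂ - x₂ * x₁ = 0)
    (hγ : x₁ * y₂ - x₂ * y₁ = 0) :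
    ∃ a b : ℝ, (a, b) ≠ (0, 0) ∧ a • x₁ + b • x₂ = 0 ∧ a • y₁ + b • y₂ = 0 := by
  rw [sub_eq_zero] at hα hβ hγ
  rcases eq_or_ne x₁ 0 with rfl | hx₁0
  · rcases eq_or_ne y₁ 0 with rfl | hy₁0
    · exact ⟨1, 0, by simp, by simp, by simp⟩
    have hx₂0 : x₂ = 0 :=
      (mul_eq_zero.mp (by simpa using hγ.symm)).resolve_right hy₁0
    subst hx₂0
    exact exists_pair_ne_zero_smul_add_smul_eq_zero (normSq_eq_zero.not.mpr hy₁0)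
      (by simp) (normSq_smul_eq_re_smul_of_mul_star_eq hα)
  · have hx : normSq x₁ • x₂ = (x₂ * star x₁).re • x₁ :=
      normSq_smul_eq_re_smul_of_mul_star_eq
        (mul_star_eq_of_commute_of_re_eq_zero hx₂ hx₁ hβ.symm)
    exact exists_pair_ne_zero_smul_add_smul_eq_zero (normSq_eq_zero.not.mpr hx₁0) hx
      (smul_eq_smul_of_mul_eq_mul hx₁0 hx hγ)

/-- Algebraic core of quasi-positivity of the curvature of Σ⁷_θ at the identity
coset: for ξᵢ = ((xᵢ,yᵢ),(-conj yᵢ,0)) with xᵢ pure imaginary, the vanishing of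
α₁, β₁ and γ₁ forces ξ₁ and ξ₂ to be linearly dependent over ℝ. -/
theorem horizontal_zero_curvature_dependent
    (rb₁ r₂ : ℝ) (h₁ : 0 < rb₁) (h₂ : 0 < r₂)
    (x₁ y₁ x₂ y₂ : ℍ[ℝ]) (hx₁ : x₁.re = 0) (hx₂ : x₂.re = 0)
    (hα : y₂ * star y₁ - y₁ * star y₂ = 0)
    (hβ : x₁ * x₂ - x₂ * x₁ = 0)
    (hγ : x₁ * y₂ - x₂ * y₁ = 0) :
    ∃ a b : ℝ, (a, b) ≠ (0, 0) ∧ a • x₁ + b • x₂ = 0 ∧ a • y₁ + b • y₂ = 0 :=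
  horizontal_zero_curvature_dependent_general x₁ y₁ x₂ y₂ hx₁ hx₂ hα hβ hγ
end
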